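/- The optimal value C* of OriginalFluid equals λ·c^f(r) minus the optimal value of SimplerFluid; that is, min OriginalFluid = λ·c^f(r) − max{ Σ_{a∈S} ν_a·c^f(a) : ν ≥ 0, Σ_{a∈anc(i)} ν_a·π(i)/π(a) ≤ λ·π(i) for all i ∈ S, Σ_{i∈S} ν_i ≤ μ }. -/

import Mathlib

open scoped Classical
open Finset

/-- A finite tree-structured Markov chain: a finite state space partitioned into
levels `0, …, L-1`, a root `r` at level `0`, a parent map `pa` (with `pa r = r` by
convention), and transition probabilities `p i ∈ (0,1]` of being reached from the
parent, with `p r = 1`. -/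
structure TreeMC (S : Type*) [Fintype S] [DecidableEq S] where
  /-- the number of levels -/
  L : ℕ
  /-- the root -/
  r : S
  /-- the parent map (with `pa r = r` by convention) -/
  pa : S → S
  /-- the level of each state -/
  level : S → ℕ
  /-- the probability of being reached from the parent -/
  p : S → ℝ
  level_lt : ∀ i, level i < L
  level_r : level r = 0
  root_unique : ∀ i, level i = 0 → i = r
  pa_r : pa r = r
  level_pa : ∀ i, i ≠ r → level (pa i) + 1 = level i
  p_pos : ∀ i, 0 < p i
  p_le_one : ∀ i, p i ≤ 1
  p_r : p r = 1

namespace TreeMC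

variable {S : Type*} [Fintype S] [DecidableEq S] (M : TreeMC S)

/-- The ancestors of `i`: states on the path from the root to `i` (both included). -/
noncomputable def anc (i : S) : Finset S :=
  Finset.univ.filter fun a => ∃ n : ℕ, M.pa^[n] i = a

/-- The subtree of `i`: all states having `i` as an ancestor. -/
noncomputable def subt (i : S) : Finset S :=
  Finset.univ.filter fun k => i ∈ M.anc k

/-- The subtree of a set of states. -/
noncomputable def subF (X : Finset S) : Finset S :=
  Finset.univ.filter fun k => ∃ i ∈ X, k ∈ M.subt i

/-- `π i`: the probability that a job passes through state `i`. -/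
noncomputable def pi (i : S) : ℝ :=
  ∏ a ∈ M.anc i, M.p a

/-- The children of `i`. -/
noncomputable def child (i : S) : Finset S :=
  Finset.univ.filter fun k => k ≠ M.r ∧ M.pa k = i

/-- `T` is the top set of `X`: a subset of `X` whose subtree covers `X` and in which
no state lies in the subtree of a different state. -/
def IsTopSet (X T : Finset S) : Prop :=
  T ⊆ X ∧ X ⊆ M.subF T ∧ ∀ i ∈ T, ∀ k ∈ T, i ≠ k → k ∉ M.subt i

/-- Expected future cost conditional on being in state `a`. -/
noncomputable def cf (c : S → ℝ) (a : S) : ℝ :=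
  ∑ i ∈ M.subt a, c i * M.pi i / M.pi a

/-- `V` is the ski-rental value function:
`V γ i = min (γ, c i + Σ_{k ∈ child i} p k · V γ k)`. -/
def IsSkiValue (c : S → ℝ) (V : ℝ → S → ℝ) : Prop :=
  ∀ γ : ℝ, ∀ i : S, V γ i = min γ (c i + ∑ k ∈ M.child i, M.p k * V γ k)

/-- Expected future cost-to-go `V^f`. -/
noncomputable def Vf (V : ℝ → S → ℝ) (γ : ℝ) (i : S) : ℝ :=
  ∑ k ∈ M.child i, M.p k * V γ k

/-- The candidate optimal state duals `β*(γ)`. -/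
noncomputable def betaStar (c : S → ℝ) (V : ℝ → S → ℝ) (γ : ℝ) (i : S) : ℝ :=
  max 0 (c i + M.Vf V γ i - γ)

/-- Feasibility for the dual program `D*(γ)`. -/
def DualFeasible (c : S → ℝ) (γ : ℝ) (β : S → ℝ) : Prop :=
  (∀ i, 0 ≤ β i) ∧ ∀ a, M.cf c a ≤ γ + ∑ i ∈ M.subt a, β i * M.pi i / M.pi a

/-- Feasibility for the fluid LP (OriginalFluid). -/
def OrigFeasible (lam mu : ℝ) (q ν : S → ℝ) : Prop :=
  (∀ i, 0 ≤ q i) ∧ (∀ i, 0 ≤ ν i) ∧ q M.r = lam ∧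
    (∀ i, i ≠ M.r → q i = (q (M.pa i) - ν (M.pa i)) * M.p i) ∧
    (∀ i, ν i ≤ q i) ∧ ∑ i : S, ν i ≤ mu

/-- Feasibility for the fluid LP (SimplerFluid). -/
def SimpFeasible (lam mu : ℝ) (ν : S → ℝ) : Prop :=
  (∀ i, 0 ≤ ν i) ∧ (∀ i, ∑ a ∈ M.anc i, ν a * M.pi i / M.pi a ≤ lam * M.pi i) ∧
    ∑ i : S, ν i ≤ mu

end TreeMC

/-!
Along the tree, the flow constraints determine `q` from `ν`: the mass leaving state `i`
unserved is `q i - ν i = λ π(i) - Σ_{a ∈ anc i} ν a π(i)/π(a)`. Hence `ν ≤ q` is exactly the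
ancestor constraint of SimplerFluid, and `(q, ν) ↦ ν` is a bijection between the feasible sets.
Exchanging the order of summation over pairs (ancestor, descendant) turns the cost
`Σ c i (q i - ν i)` into `λ c^f(r) - Σ ν a c^f(a)`, so minimising one is maximising the other.
-/

namespace TreeMC

variable {S : Type*} [Fintype S] [DecidableEq S] (M : TreeMC S)

lemma level_pa_lt {i : S} (hi : i ≠ M.r) : M.level (M.pa i) < M.level i := by
  have := M.level_pa i hi
  omega

@[elab_as_elim]
theorem induction_on {P : S → Prop} (i : S) (root : P M.r)
    (step : ∀ i, i ≠ M.r → P (M.pa i) → P i) : P i := by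
  induction h : M.level i generalizing i with
  | zero => rwa [M.root_unique i h]
  | succ n ih =>
    have hi : i ≠ M.r := by
      rintro rfl
      simp [M.level_r] at h
    exact step i hi (ih (M.pa i) (by have := M.level_pa i hi; omega))

lemma mem_anc_self (i : S) : i ∈ M.anc i := by
  simpa [anc] using ⟨0, rfl⟩

lemma anc_root : M.anc M.r = {M.r} := by
  ext a
  simp only [anc, mem_filter, mem_univ, true_and, mem_singleton]
  constructor
  · rintro ⟨n, rfl⟩
    exact Function.iterate_fixed M.pa_r n
  · rintro rfl
    exact ⟨0, rfl⟩

lemma anc_of_ne_root {i : S} (hi : i ≠ M.r) : M.anc i = insert i (M.anc (M.pa i)) := by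
  ext a
  simp only [anc, mem_filter, mem_univ, true_and, mem_insert]
  constructor
  · rintro ⟨_ | n, rfl⟩
    · exact .inl rfl
    · exact .inr ⟨n, rfl⟩
  · rintro (rfl | ⟨n, rfl⟩)
    · exact ⟨0, rfl⟩
    · exact ⟨n + 1, rfl⟩

lemma level_le_of_mem_anc {a i : S} (ha : a ∈ M.anc i) : M.level a ≤ M.level i := by
  induction i using M.induction_on generalizing a with
  | root => simp_all [anc_root]
  | step i hi ih =>
    rw [M.anc_of_ne_root hi, mem_insert] at ha
    rcases ha with rfl | ha
    · rfl
    · exact (ih ha).trans (M.level_pa_lt hi).le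

lemma notMem_anc_pa {i : S} (hi : i ≠ M.r) : i ∉ M.anc (M.pa i) := fun h =>
  (M.level_le_of_mem_anc h).not_gt (M.level_pa_lt hi)

lemma root_mem_anc (i : S) : M.r ∈ M.anc i := by
  induction i using M.induction_on with
  | root => exact M.mem_anc_self M.r
  | step i hi ih => exact M.anc_of_ne_root hi ▸ mem_insert_of_mem ih

lemma subt_root : M.subt M.r = univ := by
  ext i
  simp [subt, M.root_mem_anc i]

lemma pi_pos (i : S) : 0 < M.pi i :=
  prod_pos fun a _ => M.p_pos a

lemma pi_root : M.pi M.r = 1 := by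
  simp [pi, anc_root, M.p_r]

lemma pi_of_ne_root {i : S} (hi : i ≠ M.r) : M.pi i = M.p i * M.pi (M.pa i) := by
  rw [pi, M.anc_of_ne_root hi, prod_insert (M.notMem_anc_pa hi), pi]

lemma cf_root (c : S → ℝ) : M.cf c M.r = ∑ i, c i * M.pi i := by
  simp [cf, subt_root, pi_root]

lemma sum_mul_cf (c ν : S → ℝ) :
    ∑ a, ν a * M.cf c a = ∑ i, c i * ∑ a ∈ M.anc i, ν a * M.pi i / M.pi a := by
  simp only [cf, mul_sum]
  rw [sum_comm' (t' := univ) (s' := M.anc) (fun a i => by simp [subt])]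
  exact sum_congr rfl fun i _ => sum_congr rfl fun a _ => by ring

/-- The flow that leaves state `i` without being served, once `ν` is fixed: `q i - ν i` for
the unique `q` satisfying the flow equations of OriginalFluid. -/
noncomputable def residualFlow (lam : ℝ) (ν : S → ℝ) (i : S) : ℝ :=
  lam * M.pi i - ∑ a ∈ M.anc i, ν a * M.pi i / M.pi a

variable {M}

lemma residualFlow_root (lam : ℝ) (ν : S → ℝ) : M.residualFlow lam ν M.r = lam - ν M.r := by
  simp [residualFlow, anc_root, pi_root]

lemma residualFlow_add_self (lam : ℝ) (ν : S → ℝ) {i : S} (hi : i ≠ M.r) :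
    M.residualFlow lam ν i + ν i = M.residualFlow lam ν (M.pa i) * M.p i := by
  have hsum : ∑ a ∈ M.anc (M.pa i), ν a * M.pi i / M.pi a
      = (∑ a ∈ M.anc (M.pa i), ν a * M.pi (M.pa i) / M.pi a) * M.p i := by
    rw [sum_mul]
    exact sum_congr rfl fun a _ => by rw [M.pi_of_ne_root hi]; ring
  rw [residualFlow, residualFlow, M.anc_of_ne_root hi, sum_insert (M.notMem_anc_pa hi),
    mul_div_cancel_right₀ _ (M.pi_pos i).ne', hsum, M.pi_of_ne_root hi]
  ring

lemma residualFlow_nonneg_iff {lam : ℝ} {ν : S → ℝ} {i : S} :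
    0 ≤ M.residualFlow lam ν i ↔ ∑ a ∈ M.anc i, ν a * M.pi i / M.pi a ≤ lam * M.pi i :=
  sub_nonneg

lemma sum_mul_residualFlow (c : S → ℝ) (lam : ℝ) (ν : S → ℝ) :
    ∑ i, c i * M.residualFlow lam ν i = lam * M.cf c M.r - ∑ a, ν a * M.cf c a := by
  rw [cf_root, sum_mul_cf, mul_sum, ← sum_sub_distrib]
  exact sum_congr rfl fun i _ => by rw [residualFlow]; ring

lemma OrigFeasible.sub_eq_residualFlow {lam mu : ℝ} {q ν : S → ℝ}
    (hf : M.OrigFeasible lam mu q ν) (i : S) : q i - ν i = M.residualFlow lam ν i := by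
  obtain ⟨-, -, hroot, hflow, -, -⟩ := hf
  induction i using M.induction_on with
  | root => rw [hroot, residualFlow_root]
  | step i hi ih =>
    rw [hflow i hi, ih, ← residualFlow_add_self lam ν hi]
    ring

lemma OrigFeasible.simpFeasible {lam mu : ℝ} {q ν : S → ℝ} (hf : M.OrigFeasible lam mu q ν) :
    M.SimpFeasible lam mu ν := by
  refine ⟨hf.2.1, fun i => residualFlow_nonneg_iff.1 ?_, hf.2.2.2.2.2⟩
  rw [← hf.sub_eq_residualFlow i]
  exact sub_nonneg.2 (hf.2.2.2.2.1 i)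

lemma SimpFeasible.origFeasible {lam mu : ℝ} {ν : S → ℝ} (hf : M.SimpFeasible lam mu ν) :
    M.OrigFeasible lam mu (fun i => M.residualFlow lam ν i + ν i) ν := by
  obtain ⟨hν, hanc, hsum⟩ := hf
  have hres (i : S) : 0 ≤ M.residualFlow lam ν i := residualFlow_nonneg_iff.2 (hanc i)
  refine ⟨fun i => add_nonneg (hres i) (hν i), hν, ?_, fun i hi => ?_,
    fun i => le_add_of_nonneg_left (hres i), hsum⟩
  · simp [residualFlow_root]
  · simp [residualFlow_add_self lam ν hi]

theorem origFluid_values_eq_image_simpFluid_values (c : S → ℝ) (lam mu : ℝ) :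
    {v : ℝ | ∃ q ν : S → ℝ, M.OrigFeasible lam mu q ν ∧ v = ∑ i, c i * (q i - ν i)} =
      (lam * M.cf c M.r - ·) ''
        {v : ℝ | ∃ ν : S → ℝ, M.SimpFeasible lam mu ν ∧ v = ∑ a, ν a * M.cf c a} := by
  ext v
  constructor
  · rintro ⟨q, ν, hf, rfl⟩
    refine ⟨_, ⟨ν, hf.simpFeasible, rfl⟩, ?_⟩
    simp only [hf.sub_eq_residualFlow, sum_mul_residualFlow]
  · rintro ⟨_, ⟨ν, hf, rfl⟩, rfl⟩
    exact ⟨_, ν, hf.origFeasible, by simp [sum_mul_residualFlow]⟩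

end TreeMC

theorem originalFluid_eq_simplerFluid_general {S : Type*} [Fintype S] [DecidableEq S]
    (M : TreeMC S) (c : S → ℝ)
    (lam mu : ℝ)
    (Cstar Pstar : ℝ)
    (hC : IsLeast
      {v : ℝ | ∃ q ν : S → ℝ, M.OrigFeasible lam mu q ν ∧
        v = ∑ i : S, c i * (q i - ν i)} Cstar)
    (hP : IsGreatest
      {v : ℝ | ∃ ν : S → ℝ, M.SimpFeasible lam mu ν ∧
        v = ∑ a : S, ν a * M.cf c a} Pstar) :
    Cstar = lam * M.cf c M.r - Pstar := by
  have hanti : StrictAnti (lam * M.cf c M.r - ·) := fun _ _ h => sub_lt_sub_left h _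
  rw [M.origFluid_values_eq_image_simpFluid_values] at hC
  exact hC.unique (hanti.map_isLeast.2 hP)

/-- The optimal value `C*` of OriginalFluid equals `λ·c^f(r)` minus the
optimal value of SimplerFluid. -/
theorem originalFluid_eq_simplerFluid {S : Type*} [Fintype S] [DecidableEq S]
    (M : TreeMC S) (c : S → ℝ) (hc : ∀ i, 0 < c i)
    (lam mu : ℝ) (hlam0 : 0 < lam) (hlam1 : lam < 1) (hmu0 : 0 < mu) (hmu1 : mu ≤ 1)
    (Cstar Pstar : ℝ)
    (hC : IsLeast
      {v : ℝ | ∃ q ν : S → ℝ, M.OrigFeasible lam mu q ν ∧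
        v = ∑ i : S, c i * (q i - ν i)} Cstar)
    (hP : IsGreatest
      {v : ℝ | ∃ ν : S → ℝ, M.SimpFeasible lam mu ν ∧
        v = ∑ a : S, ν a * M.cf c a} Pstar) :
    Cstar = lam * M.cf c M.r - Pstar :=
  originalFluid_eq_simplerFluid_general M c lam mu Cstar Pstar hC hP
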